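/- Let Γ > 0, α > 0, n ≥ 1 and 0 ≤ k < 2^(n−1). Then sup_{t ∈ ℝ} Φ_{n,k}(t) = √((Γ/(2α))·tanh(α·2^(−n))), and the supremum is attained exactly at the midpoint t = (2k+1)·2^(−n) of the support of Φ_{n,k}. -/
import Mathlib


/-- The Haar-like basis element `Φ_{n,k}` (for `n ≥ 1`) of the Ornstein–Uhlenbeck process
with diffusion coefficient `Γ` and drift coefficient `α`. -/
noncomputable def Phi (Γ α : ℝ) (n k : ℕ) (t : ℝ) : ℝ :=
  if 2 * (k : ℝ) * 2 ^ (-(n : ℤ)) ≤ t ∧ t ≤ (2 * (k : ℝ) + 1) * 2 ^ (-(n : ℤ)) then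
    Real.sqrt (Γ / α) * Real.sinh (α * (t - 2 * (k : ℝ) * 2 ^ (-(n : ℤ)))) /
      Real.sqrt (Real.sinh (α * 2 ^ (-(n : ℤ) + 1)))
  else if (2 * (k : ℝ) + 1) * 2 ^ (-(n : ℤ)) ≤ t ∧ t ≤ 2 * ((k : ℝ) + 1) * 2 ^ (-(n : ℤ)) then
    Real.sqrt (Γ / α) * Real.sinh (α * (2 * ((k : ℝ) + 1) * 2 ^ (-(n : ℤ)) - t)) /
      Real.sqrt (Real.sinh (α * 2 ^ (-(n : ℤ) + 1)))
  else 0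

/-- The maximum of `Φ_{n,k}`: `sup_{t∈ℝ} Φ_{n,k}(t) = √((Γ/(2α))·tanh(α·2^(−n)))`, and it
is attained exactly at the midpoint `t = (2k+1)·2^(−n)` of the support of `Φ_{n,k}`. -/
theorem phi_sup (Γ α : ℝ) (hΓ : 0 < Γ) (hα : 0 < α) (n k : ℕ) (hn : 1 ≤ n)
    (hk : k < 2 ^ (n - 1)) :
    (⨆ t : ℝ, Phi Γ α n k t) = Real.sqrt (Γ / (2 * α) * Real.tanh (α * 2 ^ (-(n : ℤ)))) ∧
    ∀ t : ℝ,
      Phi Γ α n k t = Real.sqrt (Γ / (2 * α) * Real.tanh (α * 2 ^ (-(n : ℤ)))) ↔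
        t = (2 * (k : ℝ) + 1) * 2 ^ (-(n : ℤ)) := by
  set h : ℝ := (2 : ℝ) ^ (-(n : ℤ)) with hh
  have hpos : 0 < h := by positivity
  have hαh : 0 < α * h := by positivity
  set M : ℝ := Real.sqrt (Γ / (2 * α) * Real.tanh (α * h)) with hM
  have hspos : 0 < Real.sinh (α * h) := Real.sinh_pos_iff.mpr hαh
  have hcpos : 0 < Real.cosh (α * h) := Real.cosh_pos _
  have hMpos : 0 < M := by
    apply Real.sqrt_pos.mpr
    apply mul_pos (by positivity)
    rw [Real.tanh_eq_sinh_div_cosh]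
    exact div_pos hspos hcpos
  have h2 : α * (2 : ℝ) ^ (-(n : ℤ) + 1) = 2 * (α * h) := by
    rw [hh, zpow_add₀ (by norm_num : (2 : ℝ) ≠ 0), zpow_one]; ring
  have hs2 : Real.sinh (α * (2 : ℝ) ^ (-(n : ℤ) + 1))
      = 2 * Real.sinh (α * h) * Real.cosh (α * h) := by
    rw [h2, two_mul, Real.sinh_add]; ring
  have hDpos : 0 < Real.sqrt (Real.sinh (α * (2 : ℝ) ^ (-(n : ℤ) + 1))) := by
    apply Real.sqrt_pos.mpr; rw [hs2]; positivity
  have hCpos : 0 < Real.sqrt (Γ / α) := Real.sqrt_pos.mpr (by positivity)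
  set mpt : ℝ := (2 * (k : ℝ) + 1) * h with hmpt
  have key : Real.sqrt (Γ / α) * Real.sinh (α * h)
      / Real.sqrt (Real.sinh (α * (2 : ℝ) ^ (-(n : ℤ) + 1))) = M := by
    rw [hs2, hM, Real.tanh_eq_sinh_div_cosh]
    rw [show Γ / (2 * α) * (Real.sinh (α * h) / Real.cosh (α * h))
        = (Γ / α * (Real.sinh (α * h)) ^ 2)
          / (2 * Real.sinh (α * h) * Real.cosh (α * h)) by
      field_simp]
    conv_rhs => rw [Real.sqrt_div (by positivity), Real.sqrt_mul (by positivity : (0:ℝ) ≤ Γ / α),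
      Real.sqrt_sq hspos.le]
  have hPhim : Phi Γ α n k mpt = M := by
    unfold Phi
    rw [← hh, ← hmpt]
    rw [if_pos ⟨by nlinarith, le_rfl⟩]
    rw [show α * (mpt - 2 * (k : ℝ) * h) = α * h by rw [hmpt]; ring]
    exact key
  have hub : ∀ t, t ≠ mpt → Phi Γ α n k t < M := by
    intro t ht
    unfold Phi
    rw [← hh, ← hmpt]
    split_ifs with h1 h2
    · rw [← key]
      have hlt : Real.sinh (α * (t - 2 * (k : ℝ) * h)) < Real.sinh (α * h) := by
        apply Real.sinh_lt_sinh.mpr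
        have : t < mpt := lt_of_le_of_ne h1.2 ht
        rw [hmpt] at this
        nlinarith
      exact (div_lt_div_iff_of_pos_right hDpos).mpr (mul_lt_mul_of_pos_left hlt hCpos)
    · rw [← key]
      have hlt : Real.sinh (α * (2 * ((k : ℝ) + 1) * h - t)) < Real.sinh (α * h) := by
        apply Real.sinh_lt_sinh.mpr
        have : mpt < t := lt_of_le_of_ne h2.1 (Ne.symm ht)
        rw [hmpt] at this
        nlinarith
      exact (div_lt_div_iff_of_pos_right hDpos).mpr (mul_lt_mul_of_pos_left hlt hCpos)
    · exact hMpos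
  have hle : ∀ t, Phi Γ α n k t ≤ M := by
    intro t
    rcases eq_or_ne t mpt with rfl | ht
    · exact hPhim.le
    · exact (hub t ht).le
  have hbdd : BddAbove (Set.range fun t => Phi Γ α n k t) := by
    refine ⟨M, ?_⟩
    rintro x ⟨t, rfl⟩
    exact hle t
  constructor
  · apply le_antisymm
    · exact ciSup_le hle
    · rw [← hPhim]
      exact le_ciSup hbdd mpt
  · intro t
    constructor
    · intro hEq
      by_contra ht
      exact (hub t ht).ne hEq
    · rintro rfl
      exact hPhim
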